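/- Let τ be in the upper half-plane, set q = e^{2πiτ}, let z ∈ ℂ with y = e^{2πiz}, and let x ∈ ℂ be such that x ∉ 2πi·ℤ and θ(x/(2πi), τ) ≠ 0. Then e^{-πiz} · (x/(1 - e^{-x})) · ∏_{n≥1} [(1 - y q^{n-1} e^{-x})(1 - y^{-1} q^n e^{x})] / [(1 - q^n e^{-x})(1 - q^n e^{x})] = x · θ(x/(2πi) - z, τ) / θ(x/(2πi), τ), where the infinite product converges absolutely. -/

import Mathlib

/-!
With `w = x/(2πi)`, so that `e^{2πiw} = e^x`, both theta functions factor into infinite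
`q`-Pochhammer symbols `(a; q)_∞ = ∏_{n ≥ 0} (1 - a qⁿ)`. Splitting off the `n = 0` factor
`1 - y e^{-x}` of the numerator, the remaining products on the left are exactly those of
`θ(w - z)/θ(w)`, and what is left is the sine identity
`(1 - e^{-x}) sin π(w - z) = e^{-πiz} (1 - y e^{-x}) sin πw`, which follows from
`1 - e^{-2πiw} = 2i e^{-πiw} sin πw` applied at `w` and at `w - z`.
-/

open Complex

/-- The Jacobi theta function `θ_{1,1}`, defined for `τ` in the upper half-plane and `z ∈ ℂ`
by the product `θ(z,τ) = q^{1/8} (2 sin πz) ∏_{l ≥ 1} (1-q^l) ∏_{l ≥ 1} (1-q^l e^{2πiz})(1-q^l e^{-2πiz})`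
with `q = e^{2πiτ}` (so `q^{1/8} = e^{πiτ/4}`). -/
noncomputable def jTheta (z τ : ℂ) : ℂ :=
  Complex.exp ((Real.pi : ℂ) * I * τ / 4) * (2 * Complex.sin ((Real.pi : ℂ) * z)) *
    (∏' l : ℕ, (1 - Complex.exp (2 * (Real.pi : ℂ) * I * τ) ^ (l + 1))) *
    ∏' l : ℕ,
      ((1 - Complex.exp (2 * (Real.pi : ℂ) * I * τ) ^ (l + 1) *
          Complex.exp (2 * (Real.pi : ℂ) * I * z)) *
       (1 - Complex.exp (2 * (Real.pi : ℂ) * I * τ) ^ (l + 1) *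
          Complex.exp (-(2 * (Real.pi : ℂ) * I) * z)))

open scoped Real

noncomputable def qPochhammer (a q : ℂ) : ℂ :=
  ∏' n : ℕ, (1 - a * q ^ n)

section qPochhammer

variable {q : ℂ} (a : ℂ)

theorem multipliable_one_sub_mul_pow (hq : ‖q‖ < 1) :
    Multipliable fun n : ℕ => 1 - a * q ^ n := by
  simpa [sub_eq_add_neg] using Complex.multipliable_one_add_of_summable
    ((summable_geometric_of_lt_one (norm_nonneg q) hq).mul_left ‖a‖ |>.of_norm_bounded
      (f := fun n : ℕ => -(a * q ^ n)) fun n => by simp)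

theorem hasProd_qPochhammer (hq : ‖q‖ < 1) :
    HasProd (fun n : ℕ => 1 - a * q ^ n) (qPochhammer a q) :=
  (multipliable_one_sub_mul_pow a hq).hasProd

theorem hasProd_one_sub_pow_succ_mul (hq : ‖q‖ < 1) :
    HasProd (fun n : ℕ => 1 - q ^ (n + 1) * a) (qPochhammer (q * a) q) :=
  (hasProd_qPochhammer (q * a) hq).congr_fun fun n => by ring

theorem qPochhammer_eq_one_sub_mul (hq : ‖q‖ < 1) :
    qPochhammer a q = (1 - a) * qPochhammer (q * a) q := by
  have hshift : (fun n : ℕ => 1 - a * q ^ (n + 1)) = fun n => 1 - q * a * q ^ n := by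
    funext n; ring
  rw [qPochhammer, tprod_eq_zero_mul', hshift, pow_zero, mul_one, qPochhammer]
  simpa only [hshift] using multipliable_one_sub_mul_pow (q * a) hq

theorem hasProd_characteristic_product (hq : ‖q‖ < 1) (y b : ℂ)
    (ha : qPochhammer (q * a) q ≠ 0) (hb : qPochhammer (q * b) q ≠ 0) :
    HasProd (fun n : ℕ =>
        ((1 - y * q ^ n * a) * (1 - y⁻¹ * q ^ (n + 1) * b)) /
          ((1 - q ^ (n + 1) * a) * (1 - q ^ (n + 1) * b)))
      ((1 - y * a) * qPochhammer (q * (y * a)) q * qPochhammer (q * (b * y⁻¹)) q /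
        (qPochhammer (q * a) q * qPochhammer (q * b) q)) := by
  rw [← qPochhammer_eq_one_sub_mul _ hq]
  exact (((hasProd_qPochhammer _ hq).mul (hasProd_one_sub_pow_succ_mul _ hq)).div₀
    ((hasProd_one_sub_pow_succ_mul _ hq).mul (hasProd_one_sub_pow_succ_mul _ hq))
    (mul_ne_zero ha hb)).congr_fun fun n => by ring

end qPochhammer

theorem jTheta_eq_qPochhammer (w : ℂ) {τ : ℂ} (hτ : 0 < τ.im) :
    jTheta w τ = exp (π * I * τ / 4) * (2 * sin (π * w)) *
      qPochhammer (exp (2 * π * I * τ)) (exp (2 * π * I * τ)) *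
      (qPochhammer (exp (2 * π * I * τ) * exp (2 * π * I * w)) (exp (2 * π * I * τ)) *
        qPochhammer (exp (2 * π * I * τ) * exp (-(2 * π * I * w))) (exp (2 * π * I * τ))) := by
  have hq := UpperHalfPlane.norm_exp_two_pi_I_lt_one ⟨τ, hτ⟩
  have hpow := hasProd_one_sub_pow_succ_mul 1 hq
  simp only [mul_one] at hpow
  rw [jTheta, neg_mul, hpow.tprod_eq,
    ((hasProd_one_sub_pow_succ_mul _ hq).mul (hasProd_one_sub_pow_succ_mul _ hq)).tprod_eq]

theorem one_sub_exp_neg_two_pi_I_mul (w : ℂ) :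
    1 - exp (-(2 * π * I * w)) = 2 * I * exp (-(π * I * w)) * sin (π * w) := by
  have h₁ : exp (-(π * I * w)) * exp (-(π * w) * I) = exp (-(2 * π * I * w)) := by
    rw [← exp_add]; ring_nf
  have h₂ : exp (-(π * I * w)) * exp (π * w * I) = 1 := by
    rw [← exp_add]; ring_nf; exact exp_zero
  rw [Complex.sin]
  linear_combination (-I ^ 2) * h₁ + I ^ 2 * h₂ + (1 - exp (-(2 * π * I * w))) * I_sq

theorem one_sub_exp_neg_mul_sin_sub (w z : ℂ) :
    (1 - exp (-(2 * π * I * w))) * sin (π * (w - z)) =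
      exp (-(π * I * z)) * (1 - exp (2 * π * I * z) * exp (-(2 * π * I * w))) *
        sin (π * w) := by
  have hexp :
      exp (2 * π * I * z) * exp (-(2 * π * I * w)) = exp (-(2 * π * I * (w - z))) := by
    rw [← exp_add]; ring_nf
  have hhalf : exp (-(π * I * z)) * exp (-(π * I * (w - z))) = exp (-(π * I * w)) := by
    rw [← exp_add]; ring_nf
  rw [hexp, one_sub_exp_neg_two_pi_I_mul, one_sub_exp_neg_two_pi_I_mul]
  linear_combination (-(2 * I * sin (π * (w - z)) * sin (π * w))) * hhalf

theorem one_sub_exp_neg_ne_zero {x : ℂ} (hx : ∀ m : ℤ, x ≠ 2 * π * I * m) :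
    1 - exp (-x) ≠ 0 := by
  rw [sub_ne_zero, ne_comm, Ne, exp_eq_one_iff]
  rintro ⟨n, hn⟩
  exact hx (-n) (by push_cast; linear_combination -hn)

/-- Proposition 3.1 of the paper (characteristic series computation): for `τ` in the upper
half-plane, `q = e^{2πiτ}`, `y = e^{2πiz}`, and `x ∉ 2πi·ℤ` with `θ(x/(2πi), τ) ≠ 0`,
`e^{-πiz} (x/(1-e^{-x})) ∏_{n ≥ 1} (1 - y q^{n-1} e^{-x})(1 - y⁻¹ q^n e^x) /
  ((1 - q^n e^{-x})(1 - q^n e^x)) = x θ(x/(2πi) - z, τ) / θ(x/(2πi), τ)`,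
where the infinite product converges absolutely. -/
theorem characteristic_series_as_theta_ratio (τ z x q y : ℂ) (hτ : 0 < τ.im)
    (hq : q = Complex.exp (2 * (Real.pi : ℂ) * I * τ))
    (hy : y = Complex.exp (2 * (Real.pi : ℂ) * I * z))
    (hx : ∀ m : ℤ, x ≠ 2 * (Real.pi : ℂ) * I * m)
    (hθ : jTheta (x / (2 * (Real.pi : ℂ) * I)) τ ≠ 0) :
    Multipliable (fun n : ℕ =>
      ((1 - y * q ^ n * Complex.exp (-x)) * (1 - y⁻¹ * q ^ (n + 1) * Complex.exp x)) /
        ((1 - q ^ (n + 1) * Complex.exp (-x)) * (1 - q ^ (n + 1) * Complex.exp x))) ∧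
    Complex.exp (-((Real.pi : ℂ) * I * z)) * (x / (1 - Complex.exp (-x))) *
      (∏' n : ℕ,
        ((1 - y * q ^ n * Complex.exp (-x)) * (1 - y⁻¹ * q ^ (n + 1) * Complex.exp x)) /
          ((1 - q ^ (n + 1) * Complex.exp (-x)) * (1 - q ^ (n + 1) * Complex.exp x))) =
      x * jTheta (x / (2 * (Real.pi : ℂ) * I) - z) τ /
        jTheta (x / (2 * (Real.pi : ℂ) * I)) τ := by
  have hq_norm : ‖q‖ < 1 := hq ▸ UpperHalfPlane.norm_exp_two_pi_I_lt_one ⟨τ, hτ⟩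
  have hxw : 2 * π * I * (x / (2 * π * I)) = x :=
    mul_div_cancel₀ _ (by simp [Real.pi_ne_zero, I_ne_zero])
  have hsin := one_sub_exp_neg_mul_sin_sub (x / (2 * π * I)) z
  rw [hxw, ← hy, mul_comm, ← eq_div_iff (one_sub_exp_neg_ne_zero hx)] at hsin
  have hexp_neg_sub : exp (-(2 * π * I * (x / (2 * π * I) - z))) = y * exp (-x) := by
    rw [mul_sub, hxw, hy, ← exp_add, neg_sub, sub_eq_add_neg]
  have hexp_sub : exp (2 * π * I * (x / (2 * π * I) - z)) = exp x * y⁻¹ := by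
    rw [mul_sub, hxw, hy, exp_sub, div_eq_mul_inv]
  rw [jTheta_eq_qPochhammer _ hτ] at hθ ⊢
  rw [jTheta_eq_qPochhammer _ hτ, hexp_neg_sub, hexp_sub, hsin]
  simp only [← hq, hxw] at hθ ⊢
  simp only [mul_ne_zero_iff] at hθ
  obtain ⟨⟨⟨-, -, hS⟩, hP⟩, hb, ha⟩ := hθ
  have hprod := hasProd_characteristic_product (exp (-x)) hq_norm y (exp x) ha hb
  refine ⟨hprod.multipliable, ?_⟩
  rw [hprod.tprod_eq]
  generalize qPochhammer (q * exp (-x)) q = A at ha ⊢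
  generalize qPochhammer (q * exp x) q = B at hb ⊢
  generalize sin (π * (x / (2 * π * I))) = S at hS ⊢
  field_simp
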